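/- Let d ≥ 1 and let μ, ν₁, …, ν_N be Borel probability measures on ℝ^d with finite second moments, α₁, …, α_N ≥ 0 with Σᵢ αᵢ = 1, and τ > 0. For each i, let γᵢ be a coupling attaining the infimum defining W²_{2,ub}(μ, νᵢ), with disintegration γᵢ = μ ⊗ γ_{i,x}, conditional means Tᵢ(x) = ∫ y dγ_{i,x}(y), and T̄(x) = Σᵢ αᵢ Tᵢ(x). Then, with V(ρ) = Σᵢ αᵢ W²_{2,ub}(ρ, νᵢ), one has V(μ) − V(T̄_#μ) ≥ ½ ∫ ‖x − T̄(x)‖² dμ(x) ≥ 0. -/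

import Mathlib

open MeasureTheory ENNReal

noncomputable section

/-- Euclidean space ℝ^d. -/
abbrev Ed (d : ℕ) := EuclideanSpace ℝ (Fin d)

/-- The entropy function ψ(t) = t log t − t + 1 (equal to 1 at t = 0 since log 0 = 0). -/
def entropyPsi (t : ℝ) : ℝ := t * Real.log t - t + 1

open Classical in
/-- The Csiszár divergence D_ψ(ρ‖ν) for the entropy function ψ. -/
def Dpsi {d : ℕ} (ρ ν : Measure (Ed d)) : ℝ≥0∞ :=
  if ρ ≪ ν then ∫⁻ y, ENNReal.ofReal (entropyPsi ((ρ.rnDeriv ν) y).toReal) ∂ν else ⊤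

/-- Squared unbalanced Wasserstein cost W²_{2,ub,τ}(μ,ν). -/
def UOTcost {d : ℕ} (τ : ℝ) (μ ν : Measure (Ed d)) : ℝ≥0∞ :=
  ⨅ (π : Measure (Ed d × Ed d)) (_ : π.map Prod.fst = μ),
    (∫⁻ p, ENNReal.ofReal (‖p.1 - p.2‖ ^ 2 / 2) ∂π)
      + ENNReal.ofReal τ * Dpsi (π.map Prod.snd) ν

/-- γ is an optimal coupling for the unbalanced problem W²_{2,ub,τ}(μ,ν). -/
def IsOptimalCoupling {d : ℕ} (τ : ℝ) (μ ν : Measure (Ed d))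
    (γ : Measure (Ed d × Ed d)) : Prop :=
  γ.map Prod.fst = μ ∧
    (∫⁻ p, ENNReal.ofReal (‖p.1 - p.2‖ ^ 2 / 2) ∂γ)
      + ENNReal.ofReal τ * Dpsi (γ.map Prod.snd) ν = UOTcost τ μ ν

/-- The Fréchet objective V(ρ) = Σᵢ αᵢ W²_{2,ub,τ}(ρ, νᵢ). -/
def Vfun {d : ℕ} (τ : ℝ) {N : ℕ} (α : Fin N → ℝ) (ν : Fin N → Measure (Ed d))
    (ρ : Measure (Ed d)) : ℝ≥0∞ :=
  ∑ i, ENNReal.ofReal (α i) * UOTcost τ ρ (ν i)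

/-!
Disintegrate each optimal plan as `γᵢ = μ ⊗ γᵢₓ`. For fixed `x` and any point `c`,
`∫ ‖x - y‖² dγᵢₓ = ‖x - c‖² + 2 ⟪x - c, c - Tᵢ x⟫ + ∫ ‖c - y‖² dγᵢₓ`; averaging with the weights `αᵢ`
at `c = T̄ x` cancels the cross terms, so
`∑ αᵢ ∫ ‖x - y‖² dγᵢₓ = ‖x - T̄ x‖² + ∑ αᵢ ∫ ‖T̄ x - y‖² dγᵢₓ`.
Integrating against `μ`, the costs of the plans `γᵢ` exceed those of the pushed plans
`(T̄ × id)_# γᵢ` by `½ ∫ ‖x - T̄ x‖² dμ`. The pushed plans have first marginal `T̄_# μ` and the same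
second marginals as `γᵢ`, so they are competitors for `V(T̄_# μ)` with unchanged divergence terms.
-/

open RealInnerProductSpace Finset

section
variable {E : Type*} [NormedAddCommGroup E] [MeasurableSpace E] [BorelSpace E]
  [SecondCountableTopology E]

lemma integrable_sq_norm_sub_iff {κ : Measure E} [IsFiniteMeasure κ] (x : E) :
    Integrable (fun y => ‖x - y‖ ^ 2) κ ↔ Integrable (fun y => ‖y‖ ^ 2) κ := by
  rw [← memLp_two_iff_integrable_sq_norm (by fun_prop),
    ← memLp_two_iff_integrable_sq_norm (by fun_prop)]
  refine ⟨fun h => ?_, fun h => (memLp_const x).sub h⟩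
  convert (memLp_const x).sub h using 1
  ext y
  simp

variable [InnerProductSpace ℝ E] [CompleteSpace E]

lemma integral_norm_sub_sq_eq {κ : Measure E} [IsProbabilityMeasure κ]
    (hκ : Integrable (fun y => ‖y‖ ^ 2) κ) (x c : E) :
    ∫ y, ‖x - y‖ ^ 2 ∂κ
      = ‖x - c‖ ^ 2 + 2 * ⟪x - c, c - ∫ y, y ∂κ⟫ + ∫ y, ‖c - y‖ ^ 2 ∂κ := by
  have hmean : Integrable (fun y : E => y) κ :=
    ((memLp_two_iff_integrable_sq_norm aestronglyMeasurable_id).2 hκ).integrable one_le_two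
  have hsub : Integrable (fun y => c - y) κ := (integrable_const c).sub hmean
  have hfirst : Integrable (fun y => ‖x - c‖ ^ 2 + 2 * ⟪x - c, c - y⟫) κ :=
    (integrable_const _).add ((hsub.const_inner _).const_mul 2)
  have hsplit : (fun y => ‖x - y‖ ^ 2)
      = fun y => ‖x - c‖ ^ 2 + 2 * ⟪x - c, c - y⟫ + ‖c - y‖ ^ 2 := by
    ext y
    rw [← sub_add_sub_cancel x c y, norm_add_sq_real]
  rw [hsplit, integral_add hfirst ((integrable_sq_norm_sub_iff c).2 hκ),
    integral_add (integrable_const _) ((hsub.const_inner _).const_mul 2), integral_const_mul,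
    integral_inner hsub, integral_sub (integrable_const c) hmean]
  simp

variable {ι : Type*} [Fintype ι]

section
variable {κ : ι → Measure E} [∀ i, IsProbabilityMeasure (κ i)] {α : ι → ℝ} {c : E}

lemma norm_sub_sq_add_sum_integral_norm_sub_sq (hα : ∑ i, α i = 1)
    (hκ : ∀ i, α i ≠ 0 → Integrable (fun y => ‖y‖ ^ 2) (κ i))
    (hc : c = ∑ i, α i • ∫ y, y ∂κ i) (x : E) :
    ‖x - c‖ ^ 2 + ∑ i, α i * ∫ y, ‖c - y‖ ^ 2 ∂κ i = ∑ i, α i * ∫ y, ‖x - y‖ ^ 2 ∂κ i := by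
  have hterm : ∀ i, α i * ∫ y, ‖x - y‖ ^ 2 ∂κ i = α i * ‖x - c‖ ^ 2
      + 2 * ⟪x - c, α i • (c - ∫ y, y ∂κ i)⟫ + α i * ∫ y, ‖c - y‖ ^ 2 ∂κ i := by
    intro i
    rcases eq_or_ne (α i) 0 with h | h
    · simp [h]
    · rw [integral_norm_sub_sq_eq (hκ i h) x c, real_inner_smul_right]
      ring
  have hcentered : ∑ i, α i • (c - ∫ y, y ∂κ i) = 0 := by
    simp [smul_sub, sum_sub_distrib, ← sum_smul, hα, hc]
  rw [sum_congr rfl fun i _ => hterm i, sum_add_distrib, sum_add_distrib, ← mul_sum,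
    ← inner_sum, hcentered, ← sum_mul, hα]
  simp

lemma ofReal_norm_sub_sq_add_sum_lintegral_le (hα₀ : ∀ i, 0 ≤ α i) (hα : ∑ i, α i = 1)
    (hc : c = ∑ i, α i • ∫ y, y ∂κ i) (x : E) :
    ENNReal.ofReal (‖x - c‖ ^ 2 / 2)
        + ∑ i, ENNReal.ofReal (α i) * ∫⁻ y, ENNReal.ofReal (‖c - y‖ ^ 2 / 2) ∂κ i
      ≤ ∑ i, ENNReal.ofReal (α i) * ∫⁻ y, ENNReal.ofReal (‖x - y‖ ^ 2 / 2) ∂κ i := by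
  by_cases hκ : ∀ i, α i ≠ 0 → Integrable (fun y => ‖y‖ ^ 2) (κ i)
  · have hlin : ∀ z i, ENNReal.ofReal (α i) * ∫⁻ y, ENNReal.ofReal (‖z - y‖ ^ 2 / 2) ∂κ i
        = ENNReal.ofReal (α i * (∫ y, ‖z - y‖ ^ 2 ∂κ i) / 2) := by
      intro z i
      rcases eq_or_ne (α i) 0 with h | h
      · simp [h]
      rw [← ofReal_integral_eq_lintegral_ofReal
          (((integrable_sq_norm_sub_iff z).2 (hκ i h)).div_const 2)
          (ae_of_all _ fun y => by positivity),
        ← ENNReal.ofReal_mul (hα₀ i), integral_div, mul_div_assoc]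
    have hnonneg : ∀ z i, 0 ≤ α i * (∫ y, ‖z - y‖ ^ 2 ∂κ i) / 2 := fun z i =>
      div_nonneg (mul_nonneg (hα₀ i) (integral_nonneg fun y => by positivity)) zero_le_two
    simp_rw [hlin]
    rw [← ENNReal.ofReal_sum_of_nonneg fun i _ => hnonneg c i,
      ← ENNReal.ofReal_sum_of_nonneg fun i _ => hnonneg x i,
      ← ENNReal.ofReal_add (by positivity) (sum_nonneg fun i _ => hnonneg c i)]
    refine ENNReal.ofReal_le_ofReal (le_of_eq ?_)
    rw [← sum_div, ← sum_div, ← add_div, norm_sub_sq_add_sum_integral_norm_sub_sq hα hκ hc]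
  · push Not at hκ
    obtain ⟨i, hi, hni⟩ := hκ
    have hinfinite : ∫⁻ y, ENNReal.ofReal (‖x - y‖ ^ 2 / 2) ∂κ i = ∞ := by
      by_contra h
      refine hni ((integrable_sq_norm_sub_iff x).1 ?_)
      simpa using ((lintegral_ofReal_ne_top_iff_integrable (by fun_prop)
        (ae_of_all _ fun y => by positivity)).1 h).mul_const 2
    refine le_top.trans_eq (ENNReal.sum_eq_top.2 ⟨i, mem_univ i, ?_⟩).symm
    rw [hinfinite, ENNReal.mul_top (ENNReal.ofReal_pos.2 ((hα₀ i).lt_of_ne' hi)).ne']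

end

def barycentricProjection (ρ : Measure (E × E)) [IsFiniteMeasure ρ] (x : E) : E :=
  ∫ y, y ∂ρ.condKernel x

@[fun_prop]
lemma measurable_barycentricProjection (ρ : Measure (E × E)) [IsFiniteMeasure ρ] :
    Measurable (barycentricProjection ρ) :=
  (measurable_snd.stronglyMeasurable.integral_kernel_prod_right' (κ := ρ.condKernel)).measurable

lemma lintegral_norm_sub_sq_add_sum_le {μ : Measure E}
    (γ : ι → Measure (E × E)) [∀ i, IsFiniteMeasure (γ i)] (hγ : ∀ i, (γ i).fst = μ)
    {α : ι → ℝ} (hα₀ : ∀ i, 0 ≤ α i) (hα : ∑ i, α i = 1)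
    {Tbar : E → E} (hTbar : ∀ x, Tbar x = ∑ i, α i • barycentricProjection (γ i) x) :
    ∫⁻ x, ENNReal.ofReal (‖x - Tbar x‖ ^ 2 / 2) ∂μ
        + ∑ i, ENNReal.ofReal (α i) * ∫⁻ p, ENNReal.ofReal (‖Tbar p.1 - p.2‖ ^ 2 / 2) ∂γ i
      ≤ ∑ i, ENNReal.ofReal (α i) * ∫⁻ p, ENNReal.ofReal (‖p.1 - p.2‖ ^ 2 / 2) ∂γ i := by
  have hTbarm : Measurable Tbar := by
    rw [funext hTbar]
    fun_prop
  have hdisint : ∀ f : E → E, Measurable f → ∀ i,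
      ENNReal.ofReal (α i) * ∫⁻ p, ENNReal.ofReal (‖f p.1 - p.2‖ ^ 2 / 2) ∂γ i
        = ∫⁻ x, ENNReal.ofReal (α i)
            * ∫⁻ y, ENNReal.ofReal (‖f x - y‖ ^ 2 / 2) ∂(γ i).condKernel x ∂μ := by
    intro f hf i
    rw [lintegral_const_mul' _ _ ofReal_ne_top, ← hγ i,
      Measure.lintegral_condKernel (f := fun p => ENNReal.ofReal (‖f p.1 - p.2‖ ^ 2 / 2))
        (by fun_prop)]
  have hmeas : ∀ f : E → E, Measurable f → ∀ i, Measurable fun x =>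
      ENNReal.ofReal (α i) * ∫⁻ y, ENNReal.ofReal (‖f x - y‖ ^ 2 / 2) ∂(γ i).condKernel x :=
    fun f hf i => (Measurable.lintegral_kernel_prod_right'
      (f := fun p => ENNReal.ofReal (‖f p.1 - p.2‖ ^ 2 / 2)) (by fun_prop)).const_mul _
  have hdisint_id := hdisint id measurable_id
  simp only [id] at hdisint_id
  simp_rw [hdisint Tbar hTbarm, hdisint_id]
  rw [← lintegral_finsetSum _ fun i _ => hmeas Tbar hTbarm i,
    ← lintegral_finsetSum _ fun i _ => by exact hmeas id measurable_id i,
    ← lintegral_add_left (by fun_prop)]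
  exact lintegral_mono fun x => ofReal_norm_sub_sq_add_sum_lintegral_le hα₀ hα (hTbar x) x
end

lemma Dpsi_self {d : ℕ} (ν : Measure (Ed d)) [SigmaFinite ν] : Dpsi ν ν = 0 := by
  classical
  rw [Dpsi, if_pos (Measure.AbsolutelyContinuous.refl ν)]
  have h : (fun y => ENNReal.ofReal (entropyPsi ((ν.rnDeriv ν) y).toReal)) =ᵐ[ν]
      (fun _ => 0) := by
    filter_upwards [Measure.rnDeriv_self ν] with y hy
    simp [hy, entropyPsi]
  rw [lintegral_congr_ae h, lintegral_zero]

section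
variable {d : ℕ} (τ : ℝ)

lemma UOTcost_le {μ ν : Measure (Ed d)} {π : Measure (Ed d × Ed d)} (hπ : π.map Prod.fst = μ) :
    UOTcost τ μ ν
      ≤ (∫⁻ p, ENNReal.ofReal (‖p.1 - p.2‖ ^ 2 / 2) ∂π)
        + ENNReal.ofReal τ * Dpsi (π.map Prod.snd) ν :=
  iInf₂_le π hπ

lemma UOTcost_map_le {μ ν : Measure (Ed d)} {γ : Measure (Ed d × Ed d)}
    (hγ : γ.map Prod.fst = μ) {f : Ed d → Ed d} (hf : Measurable f) :
    UOTcost τ (μ.map f) ν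
      ≤ (∫⁻ p, ENNReal.ofReal (‖f p.1 - p.2‖ ^ 2 / 2) ∂γ)
        + ENNReal.ofReal τ * Dpsi (γ.map Prod.snd) ν := by
  have hfg : Measurable (Prod.map f (id : Ed d → Ed d)) := hf.prodMap measurable_id
  have hfst : (γ.map (Prod.map f id)).map Prod.fst = μ.map f := by
    rw [Measure.map_map measurable_fst hfg, ← hγ, Measure.map_map hf measurable_fst]
    rfl
  have hsnd : (γ.map (Prod.map f id)).map Prod.snd = γ.map Prod.snd := by
    rw [Measure.map_map measurable_snd hfg]
    rfl
  calc UOTcost τ (μ.map f) ν ≤ _ := UOTcost_le τ hfst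
    _ = _ := by rw [hsnd, lintegral_map (by fun_prop) hfg]; rfl

lemma UOTcost_lt_top {μ ν : Measure (Ed d)} [IsProbabilityMeasure μ] [IsProbabilityMeasure ν]
    (hμ : Integrable (fun x => ‖x‖ ^ 2) μ) (hν : Integrable (fun x => ‖x‖ ^ 2) ν) :
    UOTcost τ μ ν < ∞ := by
  have hcost : Integrable (fun p : Ed d × Ed d => ‖p.1 - p.2‖ ^ 2 / 2) (μ.prod ν) := by
    refine ((hμ.comp_fst ν).add (hν.comp_snd μ)).mono' (by fun_prop)
      (ae_of_all _ fun p => ?_)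
    rw [Pi.add_apply, Real.norm_of_nonneg (by positivity)]
    nlinarith [pow_le_pow_left₀ (norm_nonneg _) (norm_sub_le p.1 p.2) 2, sq_nonneg (‖p.1‖ - ‖p.2‖)]
  calc UOTcost τ μ ν ≤ _ := UOTcost_le τ (π := μ.prod ν) Measure.fst_prod
    _ < ∞ := by
      rw [show (μ.prod ν).map Prod.snd = ν from Measure.snd_prod, Dpsi_self, mul_zero, add_zero]
      exact hcost.lintegral_lt_top
end

theorem averageMap_objective_gap_lower_bound_general
    {d N : ℕ} (τ : ℝ)
    (μ : Measure (Ed d)) [IsProbabilityMeasure μ]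
    (hμ : Integrable (fun x => ‖x‖ ^ 2) μ)
    (ν : Fin N → Measure (Ed d)) [∀ i, IsProbabilityMeasure (ν i)]
    (hν : ∀ i, Integrable (fun x => ‖x‖ ^ 2) (ν i))
    (α : Fin N → ℝ) (hα : ∀ i, 0 ≤ α i) (hαsum : ∑ i, α i = 1)
    (γ : Fin N → Measure (Ed d × Ed d)) [∀ i, IsFiniteMeasure (γ i)]
    (hγ : ∀ i, IsOptimalCoupling τ μ (ν i) (γ i))
    (T : Fin N → Ed d → Ed d)
    (hT : ∀ i x, T i x = ∫ y, y ∂((γ i).condKernel x))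
    (Tbar : Ed d → Ed d)
    (hTbar : ∀ x, Tbar x = ∑ i, α i • T i x) :
    (∫⁻ x, ENNReal.ofReal (‖x - Tbar x‖ ^ 2 / 2) ∂μ)
        ≤ Vfun τ α ν μ - Vfun τ α ν (μ.map Tbar) ∧
      (0 : ℝ≥0∞) ≤ ∫⁻ x, ENNReal.ofReal (‖x - Tbar x‖ ^ 2 / 2) ∂μ := by
  refine ⟨?_, zero_le⟩
  have hTbar' : ∀ x, Tbar x = ∑ i, α i • barycentricProjection (γ i) x :=
    fun x => by simp only [barycentricProjection, hTbar, hT]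
  have hTbarm : Measurable Tbar := by
    rw [funext hTbar']
    fun_prop
  set gap := ∫⁻ x, ENNReal.ofReal (‖x - Tbar x‖ ^ 2 / 2) ∂μ
  set C := fun i => ∫⁻ p, ENNReal.ofReal (‖p.1 - p.2‖ ^ 2 / 2) ∂γ i
  set C' := fun i => ∫⁻ p, ENNReal.ofReal (‖Tbar p.1 - p.2‖ ^ 2 / 2) ∂γ i
  set D := fun i => ENNReal.ofReal τ * Dpsi ((γ i).map Prod.snd) (ν i)
  have hcore : gap + ∑ i, ENNReal.ofReal (α i) * C' i ≤ ∑ i, ENNReal.ofReal (α i) * C i :=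
    lintegral_norm_sub_sq_add_sum_le γ (fun i => (hγ i).1) hα hαsum hTbar'
  have hVμ : Vfun τ α ν μ = ∑ i, ENNReal.ofReal (α i) * (C i + D i) := by
    exact sum_congr rfl fun i _ => by rw [← (hγ i).2]
  have hVmap : Vfun τ α ν (μ.map Tbar) ≤ ∑ i, ENNReal.ofReal (α i) * (C' i + D i) :=
    sum_le_sum fun i _ => by gcongr; exact UOTcost_map_le τ (hγ i).1 hTbarm
  have hadd : gap + Vfun τ α ν (μ.map Tbar) ≤ Vfun τ α ν μ :=
    calc gap + Vfun τ α ν (μ.map Tbar)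
        ≤ gap + ∑ i, ENNReal.ofReal (α i) * (C' i + D i) := by gcongr
      _ = (gap + ∑ i, ENNReal.ofReal (α i) * C' i) + ∑ i, ENNReal.ofReal (α i) * D i := by
          simp only [mul_add, sum_add_distrib, add_assoc]
      _ ≤ ∑ i, ENNReal.ofReal (α i) * C i + ∑ i, ENNReal.ofReal (α i) * D i := by gcongr
      _ = Vfun τ α ν μ := by rw [hVμ, ← sum_add_distrib]; simp only [mul_add]
  -- `V(μ)` is finite, so the truncated subtraction of `ℝ≥0∞` behaves like the real one.
  have hfinite : Vfun τ α ν μ ≠ ∞ := (ENNReal.sum_lt_top.2 fun i _ =>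
    ENNReal.mul_lt_top ofReal_lt_top (UOTcost_lt_top τ hμ (hν i))).ne
  exact ENNReal.le_sub_of_add_le_right (ne_top_of_le_ne_top hfinite (le_add_self.trans hadd)) hadd

theorem averageMap_objective_gap_lower_bound
    {d N : ℕ} (hd : 1 ≤ d) (τ : ℝ) (hτ : 0 < τ)
    (μ : Measure (Ed d)) [IsProbabilityMeasure μ]
    (hμ : Integrable (fun x => ‖x‖ ^ 2) μ)
    (ν : Fin N → Measure (Ed d)) [∀ i, IsProbabilityMeasure (ν i)]
    (hν : ∀ i, Integrable (fun x => ‖x‖ ^ 2) (ν i))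
    (α : Fin N → ℝ) (hα : ∀ i, 0 ≤ α i) (hαsum : ∑ i, α i = 1)
    (γ : Fin N → Measure (Ed d × Ed d)) [∀ i, IsFiniteMeasure (γ i)]
    (hγ : ∀ i, IsOptimalCoupling τ μ (ν i) (γ i))
    (T : Fin N → Ed d → Ed d)
    (hT : ∀ i x, T i x = ∫ y, y ∂((γ i).condKernel x))
    (Tbar : Ed d → Ed d)
    (hTbar : ∀ x, Tbar x = ∑ i, α i • T i x) :
    (∫⁻ x, ENNReal.ofReal (‖x - Tbar x‖ ^ 2 / 2) ∂μ)
        ≤ Vfun τ α ν μ - Vfun τ α ν (μ.map Tbar) ∧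
      (0 : ℝ≥0∞) ≤ ∫⁻ x, ENNReal.ofReal (‖x - Tbar x‖ ^ 2 / 2) ∂μ :=
  averageMap_objective_gap_lower_bound_general τ μ hμ ν hν α hα hαsum γ hγ T hT Tbar hTbar
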